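/- arXiv:1211.3366 — 5 statements merged into one kernel-verified Lean document; each statement's English description precedes it below -/
import Mathlib

section
/- Let $B \subset \mathbb{R}^d$ be open and bounded and let $A \subset B$ be relatively convex in $B$. Then the closure $\overline{A}$ is relatively convex in $B$. -/
/-!
A segment is compact, so some δ-thickening of a segment `[x, y] ⊆ B` still lies in the open set
`B`. Segments whose endpoints are δ-close to `x` and `y` lie in that thickening, hence in `B`;
with endpoints taken in `A` they therefore lie in `A`, and they approximate `[x, y]` uniformly.
-/

open Set Metric

variable {E : Type*} [NormedAddCommGroup E] [NormedSpace ℝ E]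

def IsRelConvexIn (B A : Set E) : Prop :=
  ∀ x ∈ A, ∀ y ∈ A, segment ℝ x y ⊆ B → segment ℝ x y ⊆ A

theorem isCompact_segment (x y : E) : IsCompact (segment ℝ x y) := by
  rw [segment_eq_image_lineMap]
  exact isCompact_Icc.image AffineMap.lineMap_continuous

theorem segment_subset_thickening {x y x' y' : E} {δ : ℝ} (hx : dist x x' < δ)
    (hy : dist y y' < δ) : segment ℝ x y ⊆ thickening δ (segment ℝ x' y') := by
  rintro _ ⟨a, b, ha, hb, hab, rfl⟩
  refine mem_thickening_iff.2 ⟨a • x' + b • y', ⟨a, b, ha, hb, hab, rfl⟩, ?_⟩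
  have hcombo : a • (x - x') + b • (y - y') ∈ ball (0 : E) δ :=
    convex_ball 0 δ (mem_ball_zero_iff.2 (dist_eq_norm x x' ▸ hx))
      (mem_ball_zero_iff.2 (dist_eq_norm y y' ▸ hy)) ha hb hab
  have hdiff : a • x + b • y - (a • x' + b • y') = a • (x - x') + b • (y - y') := by
    rw [smul_sub, smul_sub]
    abel
  rwa [dist_eq_norm, hdiff, ← mem_ball_zero_iff]

theorem IsRelConvexIn.closure {A B : Set E} (hB : IsOpen B) (hA : IsRelConvexIn B A) :
    IsRelConvexIn B (closure A) := by
  intro x hx y hy hxyB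
  obtain ⟨δ, hδ, hδB⟩ := (isCompact_segment x y).exists_thickening_subset_open hB hxyB
  refine fun z hz => Metric.mem_closure_iff.2 fun ε hε => ?_
  obtain ⟨x', hx', hxx'⟩ := Metric.mem_closure_iff.1 hx _ (lt_min hε hδ)
  obtain ⟨y', hy', hyy'⟩ := Metric.mem_closure_iff.1 hy _ (lt_min hε hδ)
  have hx'y'B : segment ℝ x' y' ⊆ B :=
    (segment_subset_thickening ((dist_comm x x' ▸ hxx').trans_le (min_le_right _ _))
      ((dist_comm y y' ▸ hyy').trans_le (min_le_right _ _))).trans hδB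
  obtain ⟨w, hw, hzw⟩ := mem_thickening_iff.1 (segment_subset_thickening
    (hxx'.trans_le (min_le_left _ _)) (hyy'.trans_le (min_le_left _ _)) hz)
  exact ⟨w, hA x' hx' y' hy' hx'y'B hw, hzw⟩

theorem stmt_1_general (d : ℕ) (A B : Set (EuclideanSpace ℝ (Fin d)))
    (hBopen : IsOpen B)
    (hA : ∀ x ∈ A, ∀ y ∈ A, segment ℝ x y ⊆ B → segment ℝ x y ⊆ A) :
    ∀ x ∈ closure A, ∀ y ∈ closure A, segment ℝ x y ⊆ B → segment ℝ x y ⊆ closure A :=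
  IsRelConvexIn.closure hBopen hA

theorem stmt_1 (d : ℕ) (A B : Set (EuclideanSpace ℝ (Fin d)))
    (hBopen : IsOpen B) (hBbdd : Bornology.IsBounded B) (hAB : A ⊆ B)
    (hA : ∀ x ∈ A, ∀ y ∈ A, segment ℝ x y ⊆ B → segment ℝ x y ⊆ A) :
    ∀ x ∈ closure A, ∀ y ∈ closure A, segment ℝ x y ⊆ B → segment ℝ x y ⊆ closure A :=
  stmt_1_general d A B hBopen hA
end

section
/- Let $B \subset \mathbb{R}^d$ and $f : B \to \mathbb{R}$. Then $f$ is locally convex in $B$ (i.e., $f(tx+(1-t)y) \le t f(x) + (1-t) f(y)$ whenever $x, y \in B$, $t \in [0,1]$, and the segment $L_{x,y} \subset B$) if and only if the epigraph $\mathrm{epi}(f) = \{(x,\mu) \in B \times \mathbb{R} : \mu \ge f(x)\}$ is relatively convex in $B \times \mathbb{R}$. -/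
open Set

section

variable (𝕜 : Type*) {E F : Type*} [Field 𝕜] [LinearOrder 𝕜] [IsStrictOrderedRing 𝕜]
  [AddCommGroup E] [Module 𝕜 E] [AddCommGroup F] [Module 𝕜 F]

def IsRelConvex (C A : Set E) : Prop :=
  ∀ a ∈ A, ∀ b ∈ A, segment 𝕜 a b ⊆ C → segment 𝕜 a b ⊆ A

def LocallyConvexOn (B : Set E) (f : E → 𝕜) : Prop :=
  ∀ x ∈ B, ∀ y ∈ B, segment 𝕜 x y ⊆ B → ∀ t ∈ Icc (0 : 𝕜) 1,
    f (t • x + (1 - t) • y) ≤ t * f x + (1 - t) * f y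

variable {𝕜}

def epigraphOn (B : Set E) (f : E → 𝕜) : Set (E × 𝕜) :=
  {q | q.1 ∈ B ∧ f q.1 ≤ q.2}

theorem segment_subset_prod_univ_iff (p p' : E × F) (B : Set E) :
    segment 𝕜 p p' ⊆ B ×ˢ (univ : Set F) ↔ segment 𝕜 p.1 p'.1 ⊆ B := by
  rw [prod_univ, ← image_subset_iff]
  exact iff_of_eq (congrArg (· ⊆ B) (image_segment 𝕜 (LinearMap.fst 𝕜 E F).toAffineMap p p'))

variable {B : Set E} {f : E → 𝕜}

theorem LocallyConvexOn.isRelConvex_epigraphOn (hf : LocallyConvexOn 𝕜 B f) :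
    IsRelConvex 𝕜 (B ×ˢ univ) (epigraphOn B f) := by
  intro p hp p' hp' hseg
  rw [segment_subset_prod_univ_iff] at hseg
  rintro _ ⟨a, b, ha, hb, hab, rfl⟩
  obtain rfl : b = 1 - a := eq_sub_of_add_eq' hab
  refine ⟨hseg ⟨a, 1 - a, ha, hb, hab, rfl⟩, ?_⟩
  calc f (a • p.1 + (1 - a) • p'.1) ≤ a * f p.1 + (1 - a) * f p'.1 :=
        hf _ hp.1 _ hp'.1 hseg a ⟨ha, by linarith⟩
    _ ≤ a * p.2 + (1 - a) * p'.2 := by gcongr; exacts [hp.2, hp'.2]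

theorem IsRelConvex.locallyConvexOn (hepi : IsRelConvex 𝕜 (B ×ˢ univ) (epigraphOn B f)) :
    LocallyConvexOn 𝕜 B f := by
  intro x hx y hy hseg t ht
  have hsub := hepi (x, f x) ⟨hx, le_rfl⟩ (y, f y) ⟨hy, le_rfl⟩
    ((segment_subset_prod_univ_iff _ _ B).2 hseg)
  simpa using (hsub ⟨t, 1 - t, ht.1, sub_nonneg.2 ht.2, add_sub_cancel t 1, rfl⟩).2

theorem locallyConvexOn_iff_isRelConvex_epigraphOn :
    LocallyConvexOn 𝕜 B f ↔ IsRelConvex 𝕜 (B ×ˢ univ) (epigraphOn B f) :=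
  ⟨LocallyConvexOn.isRelConvex_epigraphOn, IsRelConvex.locallyConvexOn⟩

end

theorem stmt_2 (d : ℕ) (B : Set (EuclideanSpace ℝ (Fin d)))
    (f : EuclideanSpace ℝ (Fin d) → ℝ) :
    (∀ x ∈ B, ∀ y ∈ B, segment ℝ x y ⊆ B → ∀ t ∈ Set.Icc (0:ℝ) 1,
        f (t • x + (1 - t) • y) ≤ t * f x + (1 - t) * f y) ↔
      (∀ p ∈ {q : EuclideanSpace ℝ (Fin d) × ℝ | q.1 ∈ B ∧ f q.1 ≤ q.2},
        ∀ p' ∈ {q : EuclideanSpace ℝ (Fin d) × ℝ | q.1 ∈ B ∧ f q.1 ≤ q.2},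
        segment ℝ p p' ⊆ B ×ˢ (Set.univ : Set ℝ) →
        segment ℝ p p' ⊆ {q : EuclideanSpace ℝ (Fin d) × ℝ | q.1 ∈ B ∧ f q.1 ≤ q.2}) :=
  locallyConvexOn_iff_isRelConvex_epigraphOn
end

section
/- Let $X = e_1 \in \mathbb{R}^d$ and $z_0 \in \mathbb{C}$ with $\mathrm{Re}\, z_0 = (\mathrm{Im}\, z_0)^2$ and $\mathrm{Re}\, z_0 > 0$. For $\epsilon > 0$ define $p_{z_0,\epsilon}(\xi) = |\xi|^2 + \epsilon(1-\epsilon) + i(1-2\epsilon)\xi_1 - z_0$ for $\xi \in \mathbb{R}^d$. Then there exist $c > 0$ and $\epsilon_0 > 0$ such that for all $0 < \epsilon < \epsilon_0$ and all $\xi \in \mathbb{R}^d$, $|p_{z_0,\epsilon}(\xi)| \ge c\,\epsilon\, (1 + |\xi|^2)$. -/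
/-! Write `s = Im z₀`, so `Re z₀ = s² > 0`, and split `p_{z₀,ε}(ξ) = A + iB` with
`A = |ξ|² + ε(1 - ε) - s²` and `B = (1 - 2ε)ξ₁ - s`. Since `((1 - 2ε)ξ₁)² = (s + B)²` and
`ξ₁² ≤ |ξ|²`, the identity `1 - (1 - 2ε)² = 4ε(1 - ε)` gives `|A| + 2|s||B| ≥ 4ε(1 - ε)s²`,
which controls `p` on bounded sets of `ξ`; for `|ξ|² ≥ 2s² + 1` the real part alone is
at least `(1 + |ξ|²)/2`. -/

lemma four_mul_sq_le_abs_add_two_mul_abs_mul_abs {s ε t x : ℝ} (hε₀ : 0 ≤ ε) (hε₁ : ε ≤ 1)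
    (hxt : x ^ 2 ≤ t) :
    4 * ε * (1 - ε) * s ^ 2 ≤
      |t + ε * (1 - ε) - s ^ 2| + 2 * |s| * |(1 - 2 * ε) * x - s| := by
  set A := t + ε * (1 - ε) - s ^ 2
  set B := (1 - 2 * ε) * x - s
  have identity : (1 - 2 * ε) ^ 2 * A - 2 * s * B =
      4 * ε * (1 - ε) * s ^ 2 + (1 - 2 * ε) ^ 2 * ε * (1 - ε) + B ^ 2 +
        (1 - 2 * ε) ^ 2 * (t - x ^ 2) := by ring
  have hA : (1 - 2 * ε) ^ 2 * A ≤ |A| := by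
    have : (1 - 2 * ε) ^ 2 ≤ 1 := by nlinarith
    nlinarith [abs_nonneg A, le_abs_self A, neg_abs_le A, sq_nonneg (1 - 2 * ε)]
  have hB : -(2 * s * B) ≤ 2 * |s| * |B| := by
    linarith [neg_abs_le (s * B), abs_mul s B]
  have : 0 ≤ (1 - 2 * ε) ^ 2 * ε * (1 - ε) + B ^ 2 + (1 - 2 * ε) ^ 2 * (t - x ^ 2) := by
    have := sub_nonneg.2 hxt
    have := sub_nonneg.2 hε₁
    positivity
  linarith

lemma mul_sq_mul_one_add_le_mul_abs_add_abs {s ε t x : ℝ} (hε₀ : 0 ≤ ε) (hε₁ : ε ≤ 1 / 2)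
    (hxt : x ^ 2 ≤ t) :
    ε * s ^ 2 * (1 + t) ≤
      (1 + 2 * |s|) * (s ^ 2 + 1) *
        (|t + ε * (1 - ε) - s ^ 2| + |(1 - 2 * ε) * x - s|) := by
  have hcore := four_mul_sq_le_abs_add_two_mul_abs_mul_abs (s := s) hε₀ (by linarith) hxt
  set A := t + ε * (1 - ε) - s ^ 2
  set B := (1 - 2 * ε) * x - s
  have hK : 0 ≤ (1 + 2 * |s|) * (s ^ 2 + 1) := by positivity
  rcases le_or_gt (2 * s ^ 2 + 1) t with hlarge | hsmall
  · have hA : (1 + t) / 2 ≤ |A| + |B| := by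
      nlinarith [le_abs_self A, abs_nonneg B, mul_nonneg hε₀ (by linarith : 0 ≤ 1 - ε)]
    have hε : ε * s ^ 2 ≤ (1 + 2 * |s|) * (s ^ 2 + 1) / 2 := by
      nlinarith [sq_nonneg s, abs_nonneg s]
    calc ε * s ^ 2 * (1 + t)
        ≤ (1 + 2 * |s|) * (s ^ 2 + 1) / 2 * (1 + t) := by gcongr; linarith [sq_nonneg x]
      _ ≤ (1 + 2 * |s|) * (s ^ 2 + 1) * (|A| + |B|) := by
        nlinarith [mul_le_mul_of_nonneg_left hA hK]
  · have hs2 : 0 ≤ ε * s ^ 2 := by positivity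
    calc ε * s ^ 2 * (1 + t)
        ≤ (s ^ 2 + 1) * (2 * ε * s ^ 2) := by nlinarith
      _ ≤ (s ^ 2 + 1) * (4 * ε * (1 - ε) * s ^ 2) := by
        refine mul_le_mul_of_nonneg_left ?_ (by positivity)
        nlinarith [mul_nonneg hs2 (by linarith : 0 ≤ 1 - 2 * ε)]
      _ ≤ (s ^ 2 + 1) * ((1 + 2 * |s|) * (|A| + |B|)) := by
        refine mul_le_mul_of_nonneg_left ?_ (by positivity)
        nlinarith [abs_nonneg A, abs_nonneg B, abs_nonneg s]
      _ = (1 + 2 * |s|) * (s ^ 2 + 1) * (|A| + |B|) := by ring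

lemma sq_apply_le_sq_norm {ι : Type*} [Fintype ι] (ξ : EuclideanSpace ℝ ι) (i : ι) :
    ξ i ^ 2 ≤ ‖ξ‖ ^ 2 := by
  simpa only [sq_abs, Real.norm_eq_abs] using
    pow_le_pow_left₀ (norm_nonneg _) (PiLp.norm_apply_le ξ i) 2

theorem stmt_12 (d : ℕ) (hd : 0 < d) (z₀ : ℂ)
    (hz₀ : z₀.re = z₀.im ^ 2) (hz₀pos : 0 < z₀.re) :
    ∃ c > 0, ∃ ε₀ > 0, ∀ ε : ℝ, 0 < ε → ε < ε₀ →
      ∀ ξ : EuclideanSpace ℝ (Fin d),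
        c * ε * (1 + ‖ξ‖ ^ 2) ≤
          ‖((‖ξ‖ ^ 2 + ε * (1 - ε) : ℝ) +
            Complex.I * ((1 - 2 * ε) * ξ ⟨0, hd⟩ : ℝ) - z₀ : ℂ)‖ := by
  set s := z₀.im
  have hs : 0 < s ^ 2 := hz₀ ▸ hz₀pos
  refine ⟨s ^ 2 / (2 * ((1 + 2 * |s|) * (s ^ 2 + 1))), by positivity, 1 / 2, by norm_num, ?_⟩
  intro ε hε₀ hε₁ ξ
  set w : ℂ := (‖ξ‖ ^ 2 + ε * (1 - ε) : ℝ) + Complex.I * ((1 - 2 * ε) * ξ ⟨0, hd⟩ : ℝ) - z₀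
  have hre : w.re = ‖ξ‖ ^ 2 + ε * (1 - ε) - s ^ 2 := by simp [w, hz₀, -Complex.ofReal_pow]
  have him : w.im = (1 - 2 * ε) * ξ ⟨0, hd⟩ - s := by simp [w, s, -Complex.ofReal_pow]
  have hbound := mul_sq_mul_one_add_le_mul_abs_add_abs (s := s) hε₀.le hε₁.le
    (sq_apply_le_sq_norm ξ ⟨0, hd⟩)
  rw [← hre, ← him] at hbound
  have hw : |w.re| + |w.im| ≤ 2 * ‖w‖ := by
    linarith [Complex.abs_re_le_norm w, Complex.abs_im_le_norm w]
  have hK : 0 ≤ (1 + 2 * |s|) * (s ^ 2 + 1) := by positivity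
  rw [div_mul_eq_mul_div, div_mul_eq_mul_div, div_le_iff₀ (by positivity)]
  nlinarith [mul_le_mul_of_nonneg_left hw hK]
end

section
/- In the setting of the previous bracket computation, if $\varphi = \epsilon\psi$ with the Hessian $\partial^2\psi(x) \ge \gamma\, \mathrm{Id}$ for some $\gamma > 0$ uniformly on a bounded set $K$, then there exist $C > 0$ and $\epsilon_0 > 0$ such that for all $0 < \epsilon < \epsilon_0$, all $x \in K$, and all $\xi \in \mathbb{R}^d$: $\{a,b\}(x,\xi) \ge C\epsilon\,(|\xi|^2 + |X|^2)$, where $X \ne 0$. -/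
open RealInnerProductSpace

theorem stmt_14 (d : ℕ) (X : EuclideanSpace ℝ (Fin d)) (hX : X ≠ 0)
    (K : Set (EuclideanSpace ℝ (Fin d))) (hK : Bornology.IsBounded K)
    (ψ : EuclideanSpace ℝ (Fin d) → ℝ) (hψ : ContDiff ℝ (⊤ : ℕ∞) ψ)
    (M : ℝ) (hgradbd : ∀ x ∈ K, ‖gradient ψ x‖ ≤ M)
    (γ : ℝ) (hγ : 0 < γ)
    (hHess : ∀ x ∈ K, ∀ v : EuclideanSpace ℝ (Fin d),
      γ * ‖v‖ ^ 2 ≤ ⟪fderiv ℝ (gradient ψ) x v, v⟫) :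
    ∃ C > 0, ∃ ε₀ > 0, ∀ ε : ℝ, 0 < ε → ε < ε₀ → ∀ x ∈ K,
      ∀ ξ : EuclideanSpace ℝ (Fin d),
        C * ε * (‖ξ‖ ^ 2 + ‖X‖ ^ 2) ≤
          4 * ε * ⟪fderiv ℝ (gradient ψ) x ξ, ξ⟫ +
            ε * ⟪fderiv ℝ (gradient ψ) x (X + (2 * ε) • gradient ψ x),
              X + (2 * ε) • gradient ψ x⟫ := by
  have hXpos : 0 < ‖X‖ := norm_pos_iff.mpr hX
  set M' : ℝ := max M 0 + 1 with hM'
  have hM'pos : 0 < M' := by positivity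
  clear_value M'
  refine ⟨γ / 4, by positivity, ‖X‖ / (4 * M'), by positivity, ?_⟩
  intro ε hε hεlt x hx ξ
  have h1 := hHess x hx ξ
  set v := X + (2 * ε) • gradient ψ x with hv
  have h2 := hHess x hx v
  have hgb : ‖gradient ψ x‖ ≤ M' := le_trans (hgradbd x hx)
    (by simp [hM']; linarith [le_max_left M 0])
  have hw : ‖(2 * ε) • gradient ψ x‖ ≤ 2 * ε * M' := by
    rw [norm_smul]
    simp only [Real.norm_eq_abs, abs_of_pos (by linarith : (0:ℝ) < 2 * ε)]
    exact mul_le_mul_of_nonneg_left hgb (by linarith)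
  have hε2 : 2 * ε * M' < ‖X‖ / 2 := by
    have h4 : ε * (4 * M') < ‖X‖ := (lt_div_iff₀ (by positivity)).mp hεlt
    nlinarith
  have hvnorm : ‖X‖ / 2 ≤ ‖v‖ := by
    have h3 : ‖X‖ ≤ ‖v‖ + ‖(2 * ε) • gradient ψ x‖ := by
      have : X = v - (2 * ε) • gradient ψ x := by simp [hv]
      rw [this]
      exact norm_sub_le _ _
    have h5 : ‖X‖ ≤ ‖v‖ + 2 * ε * M' := le_trans h3 (add_le_add_right hw _)
    linarith [hε2, h5]
  have hvsq : ‖X‖ ^ 2 / 4 ≤ ‖v‖ ^ 2 := by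
    nlinarith [norm_nonneg v]
  have h2' : γ * (‖X‖ ^ 2 / 4) ≤ ⟪fderiv ℝ (gradient ψ) x v, v⟫ :=
    le_trans (by nlinarith) h2
  have e1 : ε * (γ * ‖ξ‖ ^ 2) ≤ ε * ⟪fderiv ℝ (gradient ψ) x ξ, ξ⟫ :=
    mul_le_mul_of_nonneg_left h1 hε.le
  have e2 : ε * (γ * (‖X‖ ^ 2 / 4)) ≤ ε * ⟪fderiv ℝ (gradient ψ) x v, v⟫ :=
    mul_le_mul_of_nonneg_left h2' hε.le
  nlinarith [mul_nonneg (mul_nonneg hγ.le hε.le) (sq_nonneg ‖ξ‖), e1, e2]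
end

section
/- Let $\delta > 0$, $h > 0$, $\lambda > 0$, and let $\tau \ge 0$ be a random variable satisfying $\frac{1}{h}\int_0^\infty e^{(s-\delta)/h} P(\tau \ge s/\lambda)\,ds \ge 1$. Let $g : \mathbb{R} \to (0,\infty)$ with $\int_{\mathbb{R}} g(t) e^t\,dt < \infty$. Then for every $\epsilon_1 > 0$ and every $\epsilon \in (0,1)$, if $h$ is small enough (so that the contribution of $t < -h^{-\epsilon}$ is at most $\epsilon_1$), there exists $s(h) \ge \delta - h^{1-\epsilon}$ such that $P(\tau \ge s(h)/\lambda) \ge \left(\frac{1-2\epsilon_1}{\int g(t)e^t dt}\right) g\!\left(\frac{s(h)-\delta}{h}\right)$. -/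
/-!
Substituting `s = h t + δ` turns the hypothesis into `∫_{t > -δ/h} F ≥ 1` for
`F t = e^t P(τ ≥ (h t + δ)/λ)`. If the conclusion failed, then `F ≤ C g e^t` on `t ≥ -h^{-ε}`,
with `C = (1 - 2ε₁)/∫ g e^t`; together with the bound `ε₁` on the mass of `F` below `-h^{-ε}`
this gives `∫ F ≤ ε₁ + (1 - 2ε₁) < 1`.
-/

open MeasureTheory Set Real

section ChangeOfVariables

variable {E : Type*} [NormedAddCommGroup E] [NormedSpace ℝ E]

theorem integral_Ioi_comp_add_right (φ : ℝ → E) (a δ : ℝ) :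
    ∫ x in Ioi a, φ (x + δ) = ∫ x in Ioi (a + δ), φ x := by
  rw [← integral_indicator measurableSet_Ioi, ← integral_indicator measurableSet_Ioi,
    ← integral_add_right_eq_self (μ := volume) ((Ioi (a + δ)).indicator φ) δ]
  congr 1 with x
  simp only [indicator_apply, mem_Ioi, add_lt_add_iff_right]

theorem integral_Ioi_comp_mul_add (φ : ℝ → E) (b δ : ℝ) {h : ℝ} (hh : 0 < h) :
    ∫ t in Ioi ((b - δ) / h), φ (h * t + δ) = h⁻¹ • ∫ s in Ioi b, φ s := by
  rw [integral_comp_mul_left_Ioi (fun x => φ (x + δ)) _ hh, integral_Ioi_comp_add_right,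
    mul_div_cancel₀ _ hh.ne', sub_add_cancel]

end ChangeOfVariables

theorem integral_pos_of_forall_pos {X : Type*} [MeasurableSpace X] {ν : Measure X} [NeZero ν]
    {f : X → ℝ} (hf : Integrable f ν) (hpos : ∀ x, 0 < f x) : 0 < ∫ x, f x ∂ν := by
  refine (integral_pos_iff_support_of_nonneg (fun x => (hpos x).le) hf).2 ?_
  rw [Function.support_eq_univ fun x => (hpos x).ne']
  exact Measure.measure_univ_pos.2 (NeZero.ne ν)

theorem setIntegral_le_add_mul_integral_of_le_on_compl {X : Type*} [MeasurableSpace X]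
    {ν : Measure X} {F w : X → ℝ} {A : Set X} {ε C : ℝ} (hA : MeasurableSet A) (hF0 : 0 ≤ F)
    (hFm : AEStronglyMeasurable F ν) (hFA : IntegrableOn F A ν) (hw : Integrable w ν)
    (hw0 : 0 ≤ w) (hC : 0 ≤ C) (hFw : ∀ x ∈ Aᶜ, F x ≤ C * w x)
    (hFA_le : ∫ x in A, F x ∂ν ≤ ε) (s : Set X) :
    ∫ x in s, F x ∂ν ≤ ε + C * ∫ x, w x ∂ν := by
  have hFAc : IntegrableOn F Aᶜ ν :=
    (hw.const_mul C).integrableOn.mono' hFm.restrict <| (ae_restrict_iff' hA.compl).2 <|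
      ae_of_all _ fun x hx => (Real.norm_of_nonneg (hF0 x)).le.trans (hFw x hx)
  have hF : Integrable F ν := by
    rw [← integrableOn_univ, ← union_compl_self A]
    exact hFA.union hFAc
  calc ∫ x in s, F x ∂ν ≤ ∫ x, F x ∂ν := setIntegral_le_integral hF (ae_of_all _ hF0)
    _ = ∫ x in A, F x ∂ν + ∫ x in Aᶜ, F x ∂ν := (integral_add_compl hA hF).symm
    _ ≤ ε + ∫ x in Aᶜ, C * w x ∂ν :=
      add_le_add hFA_le (setIntegral_mono_on hFAc (hw.const_mul C).integrableOn hA.compl hFw)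
    _ ≤ ε + C * ∫ x, w x ∂ν := by
      rw [integral_const_mul]
      exact add_le_add le_rfl
        (mul_le_mul_of_nonneg_left (setIntegral_le_integral hw (ae_of_all _ hw0)) hC)

section Tail

variable {α : Type*} [MeasurableSpace α] (μ : Measure α) [IsFiniteMeasure μ] (τ : α → ℝ)

theorem antitone_toReal_measure_le : Antitone fun x => (μ {a | x ≤ τ a}).toReal :=
  fun _ _ hxy => measureReal_mono fun _ ha => hxy.trans ha

theorem measurable_toReal_measure_le : Measurable fun x => (μ {a | x ≤ τ a}).toReal :=
  (antitone_toReal_measure_le μ τ).measurable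

end Tail

theorem integrableOn_exp_mul_Iio {p : ℝ → ℝ} (hp : AEStronglyMeasurable p)
    (hp1 : ∀ x, |p x| ≤ 1) (c : ℝ) : IntegrableOn (fun t => exp t * p t) (Iio c) :=
  ((integrableOn_exp_Iic c).mono_set Iio_subset_Iic_self).mul_bdd hp.restrict
    (ae_of_all _ hp1)

theorem stmt_19_general {α : Type*} [MeasurableSpace α] (μ : Measure α) [IsProbabilityMeasure μ]
    (τ : α → ℝ)
    (δ h lam : ℝ) (hh : 0 < h)
    (hlower : 1 ≤ (1 / h) * ∫ s in Ioi (0:ℝ),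
      Real.exp ((s - δ) / h) * (μ {a | s / lam ≤ τ a}).toReal)
    (g : ℝ → ℝ) (hgpos : ∀ t, 0 < g t)
    (hgint : Integrable (fun t => g t * Real.exp t))
    (ε₁ ε : ℝ) (hε₁ : 0 < ε₁)
    (hsmall : (∫ t in Iio (-(h ^ (-ε))),
        Real.exp t * (μ {a | (h * t + δ) / lam ≤ τ a}).toReal) ≤ ε₁) :
    ∃ s : ℝ, δ - h ^ (1 - ε) ≤ s ∧
      ((1 - 2 * ε₁) / ∫ t, g t * Real.exp t) * g ((s - δ) / h) ≤
        (μ {a | s / lam ≤ τ a}).toReal := by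
  set I := ∫ t, g t * exp t
  set C := (1 - 2 * ε₁) / I
  set P : ℝ → ℝ := fun x => (μ {a | x ≤ τ a}).toReal
  set F : ℝ → ℝ := fun t => exp t * P ((h * t + δ) / lam)
  by_contra! hcon
  have hP : ∀ x, 0 ≤ P x ∧ P x ≤ 1 := fun x => ⟨measureReal_nonneg, measureReal_le_one⟩
  have hPm : Measurable fun t => P ((h * t + δ) / lam) :=
    (measurable_toReal_measure_le μ τ).comp (by fun_prop)
  have hF0 : 0 ≤ F := fun t => mul_nonneg (exp_pos t).le (hP _).1
  have hbound : ∀ t ∈ (Iio (-(h ^ (-ε))))ᶜ, F t ≤ C * (g t * exp t) := by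
    intro t ht
    rw [compl_Iio, mem_Ici] at ht
    have hs : δ - h ^ (1 - ε) ≤ h * t + δ := by
      rw [sub_eq_add_neg 1 ε, rpow_add hh, rpow_one]
      nlinarith
    have hlt := hcon _ hs
    rw [add_sub_cancel_right, mul_div_cancel_left₀ _ hh.ne'] at hlt
    calc F t ≤ exp t * (C * g t) := mul_le_mul_of_nonneg_left hlt.le (exp_pos t).le
      _ = C * (g t * exp t) := by ring
  have hI : 0 < I := integral_pos_of_forall_pos hgint fun t => mul_pos (hgpos t) (exp_pos t)
  have hC : 0 ≤ C := nonneg_of_mul_nonneg_left ((hF0 _).trans (hbound (-(h ^ (-ε))) (by simp)))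
    (mul_pos (hgpos _) (exp_pos _))
  have hmass : 1 ≤ ∫ t in Ioi ((0 - δ) / h), F t := by
    have hF : F = fun t => exp ((h * t + δ - δ) / h) * P ((h * t + δ) / lam) := by
      simp only [F, add_sub_cancel_right, mul_div_cancel_left₀ _ hh.ne']
    rwa [hF, integral_Ioi_comp_mul_add (fun s => exp ((s - δ) / h) * P (s / lam)) 0 δ hh,
      smul_eq_mul, ← one_div]
  have hupper := setIntegral_le_add_mul_integral_of_le_on_compl measurableSet_Iio hF0
    (measurable_exp.mul hPm).aestronglyMeasurable (integrableOn_exp_mul_Iio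
      hPm.aestronglyMeasurable (fun _ => (abs_of_nonneg (hP _).1).trans_le (hP _).2) _)
    hgint (fun t => (mul_pos (hgpos t) (exp_pos t)).le) hC hbound hsmall (Ioi ((0 - δ) / h))
  rw [div_mul_cancel₀ _ hI.ne'] at hupper
  linarith

theorem stmt_19 {α : Type*} [MeasurableSpace α] (μ : Measure α) [IsProbabilityMeasure μ]
    (τ : α → ℝ) (hτmeas : Measurable τ) (hτ0 : ∀ a, 0 ≤ τ a)
    (δ h lam : ℝ) (hδ : 0 < δ) (hh : 0 < h) (hlam : 0 < lam)
    (hlower : 1 ≤ (1 / h) * ∫ s in Ioi (0:ℝ),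
      Real.exp ((s - δ) / h) * (μ {a | s / lam ≤ τ a}).toReal)
    (g : ℝ → ℝ) (hgpos : ∀ t, 0 < g t)
    (hgint : Integrable (fun t => g t * Real.exp t))
    (ε₁ ε : ℝ) (hε₁ : 0 < ε₁) (hε : ε ∈ Ioo (0:ℝ) 1)
    (hsmall : (∫ t in Iio (-(h ^ (-ε))),
        Real.exp t * (μ {a | (h * t + δ) / lam ≤ τ a}).toReal) ≤ ε₁) :
    ∃ s : ℝ, δ - h ^ (1 - ε) ≤ s ∧
      ((1 - 2 * ε₁) / ∫ t, g t * Real.exp t) * g ((s - δ) / h) ≤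
        (μ {a | s / lam ≤ τ a}).toReal :=
  stmt_19_general μ τ δ h lam hh hlower g hgpos hgint ε₁ ε hε₁ hsmall
end
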